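/- arXiv:2509.12270 — 7 statements merged into one kernel-verified Lean document; each statement's English description precedes it below -/
import Mathlib

section
/- For real numbers a, b and any nonnegative integer m, the binomial coefficient C(a+b-1, m) equals the sum over i from 0 to m of C(a-1-i, m-i) * C(b-1+i, i), where binomial coefficients with real upper argument are defined via falling factorials: C(z, m) = z(z-1)...(z-m+1)/m!. -/
/-- Generalized binomial coefficient `C(z, m) = z(z-1)⋯(z-m+1)/m!` for real `z`. -/
noncomputable def rchoose (z : ℝ) (m : ℕ) : ℝ :=
  (∏ i ∈ Finset.range m, (z - i)) / m.factorial


lemma descPochhammer_smeval_real (z : ℝ) (m : ℕ) :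
    (descPochhammer ℤ m).smeval z = ∏ i ∈ Finset.range m, (z - i) := by
  induction m with
  | zero => simp [descPochhammer_zero, Polynomial.smeval_one]
  | succ n ih =>
    rw [descPochhammer_succ_right, Polynomial.smeval_mul, ih, Finset.prod_range_succ,
      Polynomial.smeval_sub, Polynomial.smeval_X, Polynomial.smeval_natCast]
    simp

lemma rchoose_eq_ringChoose (z : ℝ) (m : ℕ) : rchoose z m = Ring.choose z m := by
  have h := Ring.descPochhammer_eq_factorial_smul_choose z m
  rw [descPochhammer_smeval_real] at h
  rw [rchoose, h, nsmul_eq_mul, mul_div_cancel_left₀ _ (by exact_mod_cast m.factorial_ne_zero)]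

lemma rchoose_vandermonde (x y : ℝ) (m : ℕ) :
    rchoose (x + y) m = ∑ i ∈ Finset.range (m + 1), rchoose x i * rchoose y (m - i) := by
  simp only [rchoose_eq_ringChoose]
  rw [Ring.add_choose_eq m (Commute.all x y),
    Finset.Nat.sum_antidiagonal_eq_sum_range_succ_mk]

lemma rchoose_reflect (z : ℝ) (k : ℕ) :
    rchoose (z + k - 1) k = (-1) ^ k * rchoose (-z) k := by
  have key : ∏ t ∈ Finset.range k, (z + k - 1 - t) =
      (-1) ^ k * ∏ t ∈ Finset.range k, (-z - t) := by
    induction k with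
    | zero => simp
    | succ n ih =>
      rw [Finset.prod_range_succ', Finset.prod_range_succ]
      have h1 : ∀ t : ℕ, z + (n + 1 : ℕ) - 1 - ((t : ℕ) + 1 : ℕ) = z + n - 1 - t := by
        intro t; push_cast; ring
      simp only [h1]
      rw [ih]
      push_cast
      ring
  unfold rchoose
  rw [key, mul_div_assoc]

theorem stmt0 (a b : ℝ) (m : ℕ) :
    rchoose (a + b - 1) m =
      ∑ i ∈ Finset.range (m + 1), rchoose (a - 1 - i) (m - i) * rchoose (b - 1 + i) i := by

  have h1 : rchoose (a + b - 1) m = (-1) ^ m * rchoose ((m : ℝ) - a - b) m := by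
    have h := rchoose_reflect (a + b - m) m
    have e1 : a + b - (m : ℝ) + m - 1 = a + b - 1 := by ring
    have e2 : -(a + b - (m : ℝ)) = (m : ℝ) - a - b := by ring
    rw [e1, e2] at h
    exact h
  have e3 : ((m : ℝ) - a - b) = -b + ((m : ℝ) - a) := by ring
  rw [h1, e3, rchoose_vandermonde (-b) ((m : ℝ) - a) m, Finset.mul_sum]
  refine Finset.sum_congr rfl fun i hi => ?_
  have hle : i ≤ m := Nat.lt_succ_iff.mp (Finset.mem_range.mp hi)
  have hA : rchoose (b - 1 + i) i = (-1) ^ i * rchoose (-b) i := by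
    have h := rchoose_reflect b i
    have : b + (i : ℝ) - 1 = b - 1 + i := by ring
    rwa [this] at h
  have hB : rchoose (a - 1 - i) (m - i) = (-1) ^ (m - i) * rchoose ((m : ℝ) - a) (m - i) := by
    have h := rchoose_reflect (a - m) (m - i)
    rw [Nat.cast_sub hle] at h
    have e4 : a - (m : ℝ) + ((m : ℝ) - i) - 1 = a - 1 - i := by ring
    have e5 : -(a - (m : ℝ)) = (m : ℝ) - a := by ring
    rwa [e4, e5] at h
  rw [hA, hB]
  have hsign : ((-1 : ℝ)) ^ (m - i) * (-1) ^ i = (-1) ^ m := by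
    rw [← pow_add, Nat.sub_add_cancel hle]
  rw [← hsign]
  ring
end

section
/- Let n be a positive integer, β ≥ 0 and x > 0. For every nonnegative integer r, the r-th moment of the semi-exponential Post–Widder operator satisfies (P_n^β e_r)(x) = e^{-βx} (x/n)^r Σ_{ν=0}^∞ (βx)^ν/ν! · Γ(n+ν+r)/Γ(n+ν), where e_r(t) = t^r and (P_n^β f)(x) = e^{-βx}(n/x)^n Σ_{ν=0}^∞ (nβ)^ν/(ν! Γ(n+ν)) ∫_0^∞ t^{n+ν-1} e^{-nt/x} f(t) dt. -/
open MeasureTheory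

/-- The semi-exponential Post–Widder operator
`(P_n^β f)(x) = e^{-βx}(n/x)^n Σ_{ν=0}^∞ (nβ)^ν/(ν! Γ(n+ν)) ∫_0^∞ t^{n+ν-1} e^{-nt/x} f(t) dt`. -/
noncomputable def PW (n : ℕ) (β x : ℝ) (f : ℝ → ℝ) : ℝ :=
  Real.exp (-(β * x)) * ((n : ℝ) / x) ^ n *
    ∑' ν : ℕ, ((n : ℝ) * β) ^ ν / (ν.factorial * Real.Gamma ((n : ℝ) + ν)) *
      ∫ t in Set.Ioi (0 : ℝ), t ^ (n + ν - 1) * Real.exp (-((n : ℝ) * t) / x) * f t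

lemma key_integral (n ν r : ℕ) (hn : 1 ≤ n) (x : ℝ) (hx : 0 < x) :
    (∫ t in Set.Ioi (0 : ℝ), t ^ (n + ν - 1) * Real.exp (-((n : ℝ) * t) / x) * t ^ r)
      = (x / n) ^ (n + ν + r) * Real.Gamma ((n : ℝ) + ν + r) := by
  have hn0 : (0:ℝ) < n := by exact_mod_cast hn
  have ha : (0:ℝ) < (n : ℝ) + ν + r := by positivity
  have hr : (0:ℝ) < (n : ℝ) / x := by positivity
  have hcongr : ∀ t ∈ Set.Ioi (0:ℝ),
      t ^ (n + ν - 1) * Real.exp (-((n : ℝ) * t) / x) * t ^ r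
        = t ^ (((n : ℝ) + ν + r) - 1) * Real.exp (-(((n : ℝ)/x) * t)) := by
    intro t ht
    have ht0 : (0:ℝ) < t := ht
    have h1 : ((n : ℝ) + ν + r) - 1 = ((n + ν + r - 1 : ℕ) : ℝ) := by
      have : 1 ≤ n + ν + r := le_trans hn (by omega)
      push_cast [this]
      ring
    rw [h1, Real.rpow_natCast]
    have h2 : t ^ (n + ν - 1) * t ^ r = t ^ (n + ν + r - 1) := by
      rw [← pow_add]
      congr 1
      omega
    rw [mul_right_comm, h2]
    congr 1
    field_simp
  rw [setIntegral_congr_fun measurableSet_Ioi hcongr,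
    Real.integral_rpow_mul_exp_neg_mul_Ioi ha hr]
  have h3 : (1 / ((n:ℝ)/x)) = x / n := by field_simp
  rw [h3]
  congr 1
  rw [← Real.rpow_natCast (x/(n:ℝ)) (n + ν + r)]
  push_cast
  ring_nf

theorem stmt7 (n : ℕ) (hn : 1 ≤ n) (β x : ℝ) (hβ : 0 ≤ β) (hx : 0 < x) (r : ℕ) :
    PW n β x (fun t => t ^ r)
      = Real.exp (-(β * x)) * (x / n) ^ r *
        ∑' ν : ℕ, (β * x) ^ ν / ν.factorial *
          (Real.Gamma ((n : ℝ) + ν + r) / Real.Gamma ((n : ℝ) + ν)) := by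
  have hn0 : (0:ℝ) < n := by exact_mod_cast hn
  unfold PW
  rw [mul_assoc, mul_assoc]
  congr 1
  rw [← tsum_mul_left, ← tsum_mul_left]
  refine tsum_congr fun ν => ?_
  rw [key_integral n ν r hn x hx]
  have hΓ : (0:ℝ) < Real.Gamma ((n:ℝ) + ν) :=
    Real.Gamma_pos_of_pos (by positivity)
  have hfac : (0:ℝ) < (ν.factorial : ℝ) := by exact_mod_cast ν.factorial_pos
  have hx0 : x ≠ 0 := hx.ne'
  have hn0' : (n:ℝ) ≠ 0 := hn0.ne'
  field_simp
  ring_nf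
  have e1 : x ^ n * x⁻¹ ^ n = 1 := by rw [← mul_pow, mul_inv_cancel₀ hx0, one_pow]
  have e2 : (n:ℝ) ^ n * (n:ℝ)⁻¹ ^ n = 1 := by rw [← mul_pow, mul_inv_cancel₀ hn0', one_pow]
  have e3 : (n:ℝ) ^ ν * (n:ℝ)⁻¹ ^ ν = 1 := by rw [← mul_pow, mul_inv_cancel₀ hn0', one_pow]
  linear_combination (x ^ ν * x ^ r * β ^ ν * (n:ℝ)⁻¹ ^ r) *
    (((n:ℝ) ^ n * (n:ℝ)⁻¹ ^ n) * ((n:ℝ) ^ ν * (n:ℝ)⁻¹ ^ ν) * e1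
      + ((n:ℝ) ^ ν * (n:ℝ)⁻¹ ^ ν) * e2 + e3)
end

section
/- Let A > 0, x > 0, β ≥ 0, and let n be an integer with n > A·x. Then the semi-exponential Post–Widder operator applied to exp_A(t) = e^{At} is well-defined at x and equals (P_n^β exp_A)(x) = exp(βx · Ax/(n - Ax)) · (1 - Ax/n)^{-n}. -/
open MeasureTheory

theorem stmt10 (A x β : ℝ) (hA : 0 < A) (hx : 0 < x) (hβ : 0 ≤ β) (n : ℕ) (hn : A * x < n) :
    (∀ ν : ℕ, IntegrableOn
        (fun t => t ^ (n + ν - 1) * Real.exp (-((n : ℝ) * t) / x) * Real.exp (A * t))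
        (Set.Ioi (0 : ℝ))) ∧
    Summable (fun ν : ℕ => ((n : ℝ) * β) ^ ν / (ν.factorial * Real.Gamma ((n : ℝ) + ν)) *
        ∫ t in Set.Ioi (0 : ℝ), t ^ (n + ν - 1) * Real.exp (-((n : ℝ) * t) / x) * Real.exp (A * t)) ∧
    PW n β x (fun t => Real.exp (A * t))
      = Real.exp (β * x * (A * x / ((n : ℝ) - A * x))) * (1 - A * x / n) ^ (-(n : ℤ)) := by
  have hnx : (0 : ℝ) < n := lt_trans (by positivity) hn
  have hn1 : 1 ≤ n := by exact_mod_cast Nat.one_le_iff_ne_zero.mpr (by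
    rintro rfl; simp at hnx)
  set c : ℝ := (n : ℝ) / x - A with hc_def
  have hc : 0 < c := by
    have : A < (n : ℝ) / x := (lt_div_iff₀ hx).mpr (by linarith [mul_comm A x])
    simpa [hc_def] using sub_pos.mpr this
  have hxc : x * c = (n : ℝ) - A * x := by
    rw [hc_def, mul_sub, mul_div_assoc', mul_div_cancel_left₀ _ hx.ne']; ring
  -- pointwise rewriting of the integrand
  have hcong : ∀ ν : ℕ, ∀ t ∈ Set.Ioi (0 : ℝ),
      t ^ (n + ν - 1) * Real.exp (-((n : ℝ) * t) / x) * Real.exp (A * t)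
        = t ^ (((n : ℝ) + ν) - 1) * Real.exp (-(c * t)) := by
    intro ν t ht
    have ht' : (0 : ℝ) < t := ht
    have hexp : Real.exp (-((n : ℝ) * t) / x) * Real.exp (A * t) = Real.exp (-(c * t)) := by
      rw [← Real.exp_add]; congr 1; rw [hc_def]; ring
    have hpow : t ^ (n + ν - 1) = t ^ (((n : ℝ) + ν) - 1) := by
      rw [← Real.rpow_natCast t (n + ν - 1)]
      congr 1
      have : ((n + ν - 1 : ℕ) : ℝ) = (n : ℝ) + ν - 1 := by
        have : 1 ≤ n + ν := le_trans hn1 (Nat.le_add_right _ _)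
        push_cast [Nat.cast_sub this]; ring
      rw [this]
    rw [mul_assoc, hexp, hpow]
  have hint : ∀ ν : ℕ, IntegrableOn
      (fun t => t ^ (n + ν - 1) * Real.exp (-((n : ℝ) * t) / x) * Real.exp (A * t))
      (Set.Ioi (0 : ℝ)) := by
    intro ν
    have h1 : IntegrableOn (fun t : ℝ => t ^ (((n : ℝ) + ν) - 1) * Real.exp (-c * t ^ (1 : ℝ)))
        (Set.Ioi 0) := by
      refine integrableOn_rpow_mul_exp_neg_mul_rpow ?_ zero_lt_one hc
      have : (1 : ℝ) ≤ (n : ℝ) := by exact_mod_cast hn1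
      have : (0 : ℝ) ≤ (ν : ℝ) := Nat.cast_nonneg ν
      linarith [(by exact_mod_cast hn1 : (1:ℝ) ≤ (n:ℝ))]
    refine (h1.congr_fun (fun t ht => ?_) measurableSet_Ioi)
    rw [hcong ν t ht]
    simp [Real.rpow_one]
  have hval : ∀ ν : ℕ,
      (∫ t in Set.Ioi (0 : ℝ), t ^ (n + ν - 1) * Real.exp (-((n : ℝ) * t) / x) *
        Real.exp (A * t)) = (1 / c) ^ (n + ν) * Real.Gamma ((n : ℝ) + ν) := by
    intro ν
    have ha : (0 : ℝ) < (n : ℝ) + ν := by positivity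
    have := Real.integral_rpow_mul_exp_neg_mul_Ioi ha hc
    rw [setIntegral_congr_fun measurableSet_Ioi (hcong ν), this]
    congr 1
    rw [← Real.rpow_natCast (1 / c) (n + ν)]
    congr 1
    push_cast; ring
  refine ⟨hint, ?_, ?_⟩
  · apply Summable.congr
      ((Real.summable_pow_div_factorial ((n : ℝ) * β / c)).mul_left ((1 / c) ^ n))
    intro ν
    rw [hval ν]
    have hΓ : Real.Gamma ((n : ℝ) + ν) ≠ 0 :=
      (Real.Gamma_pos_of_pos (by positivity)).ne'
    have hfac : ((ν.factorial : ℝ)) ≠ 0 := by positivity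
    field_simp [pow_add, div_pow, mul_pow]
    ring
  · have hterm : ∀ ν : ℕ,
        ((n : ℝ) * β) ^ ν / (ν.factorial * Real.Gamma ((n : ℝ) + ν)) *
          ∫ t in Set.Ioi (0 : ℝ), t ^ (n + ν - 1) * Real.exp (-((n : ℝ) * t) / x) *
            Real.exp (A * t)
        = (1 / c) ^ n * (((n : ℝ) * β / c) ^ ν / ν.factorial) := by
      intro ν
      rw [hval ν]
      have hΓ : Real.Gamma ((n : ℝ) + ν) ≠ 0 :=
        (Real.Gamma_pos_of_pos (by positivity)).ne'
      have hfac : ((ν.factorial : ℝ)) ≠ 0 := by positivity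
      field_simp [pow_add, div_pow, mul_pow]
      ring
    unfold PW
    rw [tsum_congr hterm, tsum_mul_left]
    have hexpsum : (∑' ν : ℕ, ((n : ℝ) * β / c) ^ ν / ν.factorial)
        = Real.exp ((n : ℝ) * β / c) := by
      rw [Real.exp_eq_exp_ℝ, NormedSpace.exp_eq_tsum_div]
    rw [hexpsum]
    have hbase : ((n : ℝ) / x) ^ n * (1 / c) ^ n = (1 - A * x / n) ^ (-(n : ℤ)) := by
      rw [zpow_neg, zpow_natCast, ← inv_pow, ← mul_pow]
      congr 1
      have h1 : (1 - A * x / (n : ℝ))⁻¹ = (n : ℝ) / ((n : ℝ) - A * x) := by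
        rw [show (1 : ℝ) - A * x / n = ((n : ℝ) - A * x) / n by field_simp]
        rw [inv_div]
      rw [h1, ← hxc]
      field_simp
    have hexps : Real.exp (-(β * x)) * Real.exp ((n : ℝ) * β / c)
        = Real.exp (β * x * (A * x / ((n : ℝ) - A * x))) := by
      rw [← Real.exp_add]; congr 1
      have hcx : c = ((n : ℝ) - A * x) / x := by
        rw [eq_div_iff hx.ne', ← hxc, mul_comm]
      rw [hcx]
      have hne : (n : ℝ) - A * x ≠ 0 := by linarith
      rw [div_div_eq_mul_div, mul_div_assoc', eq_div_iff hne, add_mul, div_mul_cancel₀ _ hne]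
      ring
    calc Real.exp (-(β * x)) * ((n : ℝ) / x) ^ n * ((1 / c) ^ n * Real.exp ((n : ℝ) * β / c))
        = (Real.exp (-(β * x)) * Real.exp ((n : ℝ) * β / c)) *
            (((n : ℝ) / x) ^ n * (1 / c) ^ n) := by ring
      _ = _ := by rw [hbase, hexps]
end

section
/- Let n be a positive integer, β ≥ 0, x > 0. Then the first central moment of the semi-exponential Post–Widder operator is (P_n^β ψ_x)(x) = βx²/n, where ψ_x(t) = t - x. -/
open MeasureTheory

lemma integ_pow {c : ℝ} (hc : 0 < c) (k : ℕ) :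
    IntegrableOn (fun t : ℝ => t ^ k * Real.exp (-(c * t))) (Set.Ioi 0) := by
  have h := integrableOn_rpow_mul_exp_neg_mul_rpow (s := (k:ℝ)) (p := 1)
    ((by norm_num : (-1:ℝ) < 0).trans_le (Nat.cast_nonneg k)) one_pos hc
  refine h.congr_fun (fun t ht => ?_) measurableSet_Ioi
  dsimp only
  rw [Real.rpow_one, Real.rpow_natCast, neg_mul]

lemma int_pow {c : ℝ} (hc : 0 < c) (k : ℕ) :
    ∫ t in Set.Ioi (0:ℝ), t ^ k * Real.exp (-(c * t)) = (k.factorial : ℝ) / c ^ (k+1) := by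
  have h := Real.integral_rpow_mul_exp_neg_mul_Ioi (a := (k:ℝ)+1) (by positivity) hc
  rw [show ∫ t in Set.Ioi (0:ℝ), t ^ k * Real.exp (-(c * t))
      = ∫ t in Set.Ioi (0:ℝ), t ^ ((k:ℝ)+1-1) * Real.exp (-(c * t)) from
    setIntegral_congr_fun measurableSet_Ioi (fun t ht => by
      rw [add_sub_cancel_right, Real.rpow_natCast]), h, Real.Gamma_nat_eq_factorial,
    show ((k:ℝ)+1) = ((k+1:ℕ):ℝ) by push_cast; ring, Real.rpow_natCast]
  rw [one_div, inv_pow, inv_mul_eq_div]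

lemma sum_id (y : ℝ) : ∑' ν : ℕ, (ν : ℝ) * y ^ ν / ν.factorial = y * Real.exp y := by
  have key : (fun ν : ℕ => ((ν+1:ℕ):ℝ) * y^(ν+1) / (ν+1).factorial)
      = fun ν : ℕ => y * (y^ν / ν.factorial) := by
    funext ν
    have h0 : ((ν+1:ℕ):ℝ) ≠ 0 := by positivity
    rw [Nat.factorial_succ]
    push_cast
    field_simp
    ring
  have hs : Summable (fun ν : ℕ => (ν:ℝ) * y^ν / ν.factorial) := by
    apply (summable_nat_add_iff 1).mp
    simp only [show ∀ ν:ℕ, ((ν+1:ℕ):ℝ) * y^(ν+1) / (ν+1).factorial = y * (y^ν/ν.factorial)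
      from fun ν => congrFun key ν] at *
    exact (Real.summable_pow_div_factorial y).mul_left y
  rw [hs.tsum_eq_zero_add, tsum_congr (fun ν => congrFun key ν), tsum_mul_left]
  simp [Real.exp_eq_exp_ℝ, NormedSpace.exp_eq_tsum_div]

theorem stmt12 (n : ℕ) (hn : 1 ≤ n) (β x : ℝ) (hβ : 0 ≤ β) (hx : 0 < x) :
    PW n β x (fun t => (t - x) ^ 1) = β * x ^ 2 / n := by
  obtain ⟨m, rfl⟩ : ∃ m, n = m + 1 := ⟨n - 1, (Nat.succ_pred_eq_of_pos hn).symm⟩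
  have hm1 : (0:ℝ) < ((m+1:ℕ):ℝ) := by positivity
  set c : ℝ := ((m+1:ℕ):ℝ) / x with hc
  have hc0 : 0 < c := div_pos hm1 hx
  have harg : ∀ t : ℝ, -(((m+1:ℕ):ℝ) * t) / x = -(c * t) := by
    intro t; rw [hc]; ring
  have hint : ∀ ν : ℕ,
      (∫ t in Set.Ioi (0:ℝ), t ^ (m+1+ν-1) * Real.exp (-(((m+1:ℕ):ℝ) * t) / x) * (t - x)^1)
      = ((m+ν+1).factorial : ℝ)/c^(m+ν+2) - x * (((m+ν).factorial : ℝ)/c^(m+ν+1)) := by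
    intro ν
    have h1 : m+1+ν-1 = m+ν := by omega
    rw [h1]
    have heq : ∀ t : ℝ, t ^ (m+ν) * Real.exp (-(((m+1:ℕ):ℝ) * t) / x) * (t - x)^1
        = t^(m+ν+1) * Real.exp (-(c*t)) - x * (t^(m+ν) * Real.exp (-(c*t))) := by
      intro t; rw [harg t]; ring
    simp only [heq]
    rw [integral_sub (integ_pow hc0 (m+ν+1)) ((integ_pow hc0 (m+ν)).const_mul x),
      MeasureTheory.integral_const_mul, int_pow hc0, int_pow hc0]
  have hG : ∀ ν : ℕ, Real.Gamma (((m+1:ℕ):ℝ) + ν) = ((m+ν).factorial : ℝ) := by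
    intro ν
    rw [show (((m+1:ℕ):ℝ) + ν) = ((m+ν:ℕ):ℝ) + 1 by push_cast; ring,
      Real.Gamma_nat_eq_factorial]
  have hterm : ∀ ν : ℕ,
      (((m+1:ℕ):ℝ) * β) ^ ν / (ν.factorial * Real.Gamma (((m+1:ℕ):ℝ) + ν)) *
        ∫ t in Set.Ioi (0:ℝ), t ^ (m+1+ν-1) * Real.exp (-(((m+1:ℕ):ℝ) * t) / x) * (t - x)^1
      = ((x/((m+1:ℕ):ℝ))^(m+1) * (x/((m+1:ℕ):ℝ))) * ((ν:ℝ) * (β*x) ^ ν / ν.factorial) := by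
    intro ν
    rw [hint ν, hG ν, hc]
    have hf1 : ((ν.factorial : ℝ)) ≠ 0 := by positivity
    have hf2 : (((m+ν).factorial : ℝ)) ≠ 0 := by positivity
    have hx' : x ≠ 0 := ne_of_gt hx
    have hm' : ((m+1:ℕ):ℝ) ≠ 0 := ne_of_gt hm1
    rw [show (m+ν+1).factorial = (m+ν+1) * (m+ν).factorial from Nat.factorial_succ _,
      mul_pow (((m+1:ℕ):ℝ)) β, mul_pow β x]
    push_cast
    rw [div_pow]
    have hm'' : (m:ℝ)+1 ≠ 0 := by positivity
    simp only [div_pow]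
    field_simp
    ring
  unfold PW
  rw [tsum_congr hterm, tsum_mul_left, sum_id]
  have hx' : x ≠ 0 := ne_of_gt hx
  have hm' : ((m+1:ℕ):ℝ) ≠ 0 := ne_of_gt hm1
  rw [div_pow, Real.exp_neg]
  push_cast
  have he : Real.exp (β*x) ≠ 0 := Real.exp_ne_zero _
  have hm'' : (m:ℝ)+1 ≠ 0 := by positivity
  simp only [div_pow]
  field_simp
end

section
/- Let n be a positive integer, β ≥ 0, x > 0. Then the second central moment of the semi-exponential Post–Widder operator is (P_n^β ψ_x²)(x) = x²/n + βx³(2 + βx)/n², where ψ_x(t) = t - x. -/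
open MeasureTheory Set

lemma pwIntegrable (m : ℕ) {c : ℝ} (hc : 0 < c) :
    IntegrableOn (fun t : ℝ => t ^ m * Real.exp (-(c * t))) (Set.Ioi 0) := by
  have h := integrableOn_rpow_mul_exp_neg_mul_rpow (p := 1) (s := (m : ℝ)) (b := c)
    (by have : (0:ℝ) ≤ m := Nat.cast_nonneg m; linarith) one_pos hc
  refine h.congr_fun (fun t ht => ?_) measurableSet_Ioi
  beta_reduce
  rw [Real.rpow_natCast, Real.rpow_one, neg_mul]

lemma pwIntegral (m : ℕ) {c : ℝ} (hc : 0 < c) :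
    ∫ t in Set.Ioi (0:ℝ), t ^ m * Real.exp (-(c * t)) = m.factorial / c ^ (m + 1) := by
  have h : ∫ t in Set.Ioi (0:ℝ), t ^ m * Real.exp (-(c * t))
      = ∫ t in Set.Ioi (0:ℝ), t ^ (((m + 1 : ℕ) : ℝ) - 1) * Real.exp (-(c * t)) := by
    refine setIntegral_congr_fun measurableSet_Ioi (fun t ht => ?_)
    have h2 : ((m + 1 : ℕ) : ℝ) - 1 = (m : ℝ) := by push_cast; ring
    rw [h2, Real.rpow_natCast]
  rw [h, Real.integral_rpow_mul_exp_neg_mul_Ioi (by positivity) hc, Real.rpow_natCast,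
    show ((m + 1 : ℕ) : ℝ) = (m : ℝ) + 1 by push_cast; ring, Real.Gamma_nat_eq_factorial,
    div_pow, one_pow]
  ring

lemma pwIntegral2 (m : ℕ) {c : ℝ} (hc : 0 < c) (x : ℝ) :
    ∫ t in Set.Ioi (0:ℝ), t ^ m * Real.exp (-(c * t)) * (t - x) ^ 2
      = ((m+2).factorial / c ^ (m+3)) - 2 * x * ((m+1).factorial / c ^ (m+2))
        + x ^ 2 * (m.factorial / c ^ (m+1)) := by
  have h : ∀ t ∈ Set.Ioi (0:ℝ), t ^ m * Real.exp (-(c * t)) * (t - x) ^ 2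
      = t ^ (m+2) * Real.exp (-(c * t)) - 2 * x * (t ^ (m+1) * Real.exp (-(c * t)))
        + x ^ 2 * (t ^ m * Real.exp (-(c * t))) := by
    intro t _; ring
  rw [setIntegral_congr_fun measurableSet_Ioi h]
  have hA := pwIntegrable (m+2) hc
  have hB := (pwIntegrable (m+1) hc).const_mul (2 * x)
  have hC := (pwIntegrable m hc).const_mul (x ^ 2)
  have hAB : IntegrableOn (fun t : ℝ => t ^ (m+2) * Real.exp (-(c * t))
      - 2 * x * (t ^ (m+1) * Real.exp (-(c * t)))) (Set.Ioi 0) := hA.sub hB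
  rw [integral_add hAB hC, integral_sub hA hB, integral_const_mul, integral_const_mul,
    pwIntegral _ hc, pwIntegral _ hc, pwIntegral _ hc]

lemma pwKey (p ν : ℕ) (β x c : ℝ) (hx : x ≠ 0) (hc : 0 < c)
    (hcx : c * x = (p : ℝ) + 1) :
    (((p + 1 : ℕ) : ℝ) * β) ^ ν / (ν.factorial * Real.Gamma (((p + 1 : ℕ) : ℝ) + ν)) *
      (∫ t in Set.Ioi (0:ℝ), t ^ (p + 1 + ν - 1) * Real.exp (-(((p + 1 : ℕ) : ℝ) * t) / x)
        * (t - x) ^ 2)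
    = x ^ 2 / ((p : ℝ) + 1) ^ 2 * (((ν : ℝ) ^ 2 + ν + ((p : ℝ) + 1)) * (β * x) ^ ν / ν.factorial)
        / c ^ (p + 1) := by
  have hexp : p + 1 + ν - 1 = p + ν := by omega
  have hcc : ((p + 1 : ℕ) : ℝ) = c * x := by push_cast; linarith
  have hΓ : Real.Gamma (((p + 1 : ℕ) : ℝ) + ν) = (p + ν).factorial := by
    rw [show (((p + 1 : ℕ) : ℝ) + ν) = ((p + ν : ℕ) : ℝ) + 1 by push_cast; ring]
    exact Real.Gamma_nat_eq_factorial (p + ν)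
  have hint : (∫ t in Set.Ioi (0:ℝ), t ^ (p + 1 + ν - 1)
        * Real.exp (-(((p + 1 : ℕ) : ℝ) * t) / x) * (t - x) ^ 2)
      = ∫ t in Set.Ioi (0:ℝ), t ^ (p + ν) * Real.exp (-(c * t)) * (t - x) ^ 2 := by
    refine setIntegral_congr_fun measurableSet_Ioi (fun t ht => ?_)
    rw [hexp, hcc]
    congr 2
    field_simp
  rw [hint, pwIntegral2 _ hc, hΓ]
  have hfν : (ν.factorial : ℝ) ≠ 0 := Nat.cast_ne_zero.2 ν.factorial_ne_zero
  have hfm : ((p + ν).factorial : ℝ) ≠ 0 := Nat.cast_ne_zero.2 (p + ν).factorial_ne_zero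
  have hf2 : (((p + ν) + 2).factorial : ℝ)
      = (((p : ℝ) + ν) + 2) * (((p : ℝ) + ν) + 1) * (p + ν).factorial := by
    rw [show (p + ν) + 2 = ((p + ν) + 1) + 1 by ring, Nat.factorial_succ, Nat.factorial_succ]
    push_cast; ring
  have hf1 : (((p + ν) + 1).factorial : ℝ) = (((p : ℝ) + ν) + 1) * (p + ν).factorial := by
    rw [Nat.factorial_succ]; push_cast; ring
  have hc3 : c ^ ((p + ν) + 3) = c ^ (p + 1) * c ^ ν * c ^ 2 := by
    rw [← pow_add, ← pow_add]; congr 1; omega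
  have hc2' : c ^ ((p + ν) + 2) = c ^ (p + 1) * c ^ ν * c := by
    rw [← pow_add, ← pow_succ]; congr 1; omega
  have hc1 : c ^ ((p + ν) + 1) = c ^ (p + 1) * c ^ ν := by
    rw [← pow_add]; congr 1; omega
  have hpow : (((p + 1 : ℕ) : ℝ) * β) ^ ν = c ^ ν * (β * x) ^ ν := by
    rw [← mul_pow, hcc]; ring_nf
  have hp' : (p : ℝ) = c * x - 1 := by linarith
  have hcp : c ^ (p + 1) ≠ 0 := pow_ne_zero _ hc.ne'
  have hcν : c ^ ν ≠ 0 := pow_ne_zero _ hc.ne'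
  rw [hf2, hf1, hc3, hc2', hc1, hpow]
  push_cast
  rw [hp']
  field_simp
  ring

theorem stmt13 (n : ℕ) (hn : 1 ≤ n) (β x : ℝ) (hβ : 0 ≤ β) (hx : 0 < x) :
    PW n β x (fun t => (t - x) ^ 2) = x ^ 2 / n + β * x ^ 3 * (2 + β * x) / (n : ℝ) ^ 2 := by
  obtain ⟨p, rfl⟩ : ∃ p, n = p + 1 := ⟨n - 1, by omega⟩
  set y : ℝ := β * x with hy
  -- series facts
  have h1 : HasSum (fun ν : ℕ => y ^ ν / ν.factorial) (Real.exp y) := by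
    rw [Real.exp_eq_exp_ℝ]; exact NormedSpace.expSeries_div_hasSum_exp y
  have h2 : HasSum (fun ν : ℕ => (ν : ℝ) * y ^ ν / ν.factorial) (y * Real.exp y) := by
    have hpre := h1.mul_left y
    rw [show (fun ν : ℕ => y * (y ^ ν / ν.factorial))
        = fun ν : ℕ => ((ν + 1 : ℕ) : ℝ) * y ^ (ν + 1) / (ν + 1).factorial from
      funext fun ν => by
        have hf : (ν.factorial : ℝ) ≠ 0 := Nat.cast_ne_zero.2 ν.factorial_ne_zero
        rw [Nat.factorial_succ]; push_cast; field_simp; ring] at hpre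
    have h := (hasSum_nat_add_iff (f := fun ν : ℕ => (ν : ℝ) * y ^ ν / ν.factorial) 1).1 hpre
    simpa using h
  have h3 : HasSum (fun ν : ℕ => (ν : ℝ) * ((ν : ℝ) - 1) * y ^ ν / ν.factorial)
      (y ^ 2 * Real.exp y) := by
    have hpre := h1.mul_left (y ^ 2)
    rw [show (fun ν : ℕ => y ^ 2 * (y ^ ν / ν.factorial))
        = fun ν : ℕ => ((ν + 2 : ℕ) : ℝ) * (((ν + 2 : ℕ) : ℝ) - 1) * y ^ (ν + 2) / (ν + 2).factorial from
      funext fun ν => by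
        have hf : (ν.factorial : ℝ) ≠ 0 := Nat.cast_ne_zero.2 ν.factorial_ne_zero
        rw [show ν + 2 = (ν + 1) + 1 by ring, Nat.factorial_succ, Nat.factorial_succ]
        push_cast; field_simp; ring] at hpre
    have h := (hasSum_nat_add_iff
      (f := fun ν : ℕ => (ν : ℝ) * ((ν : ℝ) - 1) * y ^ ν / ν.factorial) 2).1 hpre
    simpa [Finset.sum_range_succ] using h
  have hG : HasSum (fun ν : ℕ => ((ν : ℝ) ^ 2 + ν + (p + 1)) * y ^ ν / ν.factorial)
      (Real.exp y * (y ^ 2 + 2 * y + (p + 1))) := by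
    have h := (h3.add (h2.mul_left 2)).add (h1.mul_left ((p : ℝ) + 1))
    rw [show (fun ν : ℕ => (ν : ℝ) * ((ν : ℝ) - 1) * y ^ ν / ν.factorial
          + 2 * ((ν : ℝ) * y ^ ν / ν.factorial) + ((p : ℝ) + 1) * (y ^ ν / ν.factorial))
        = fun ν : ℕ => ((ν : ℝ) ^ 2 + ν + (p + 1)) * y ^ ν / ν.factorial from
      funext fun ν => by ring] at h
    convert h using 1
    ring
  have hx' : x ≠ 0 := hx.ne'
  have hp1 : ((p : ℝ) + 1) ≠ 0 := by positivity
  have hc : (0:ℝ) < ((p + 1 : ℕ) : ℝ) / x := by positivity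
  have hcx : ((p + 1 : ℕ) : ℝ) / x * x = (p : ℝ) + 1 := by push_cast; field_simp
  have key := fun ν : ℕ => pwKey p ν β x _ hx' hc hcx
  simp only [PW]
  rw [tsum_congr key,
    HasSum.tsum_eq (((hG.mul_left (x ^ 2 / ((p : ℝ) + 1) ^ 2))).div_const
      ((((p + 1 : ℕ) : ℝ) / x) ^ (p + 1)))]
  have hcp : (((p + 1 : ℕ) : ℝ) / x) ^ (p + 1) ≠ 0 := pow_ne_zero _ hc.ne'
  have hey : Real.exp y ≠ 0 := (Real.exp_pos y).ne'
  rw [Real.exp_neg, hy]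
  push_cast
  field_simp
  ring
end

section
/- Let n be a positive integer, β ≥ 0, x > 0. Then the third central moment of the semi-exponential Post–Widder operator is (P_n^β ψ_x³)(x) = x³(2 + 3βx)/n² + βx⁴(6 + 6βx + β²x²)/n³, where ψ_x(t) = t - x. -/
set_option maxHeartbeats 1000000

open MeasureTheory

private lemma intOn (k : ℕ) {c : ℝ} (hc : 0 < c) :
    IntegrableOn (fun t : ℝ => t ^ k * Real.exp (-(c * t))) (Set.Ioi 0) := by
  have h := integrableOn_rpow_mul_exp_neg_mul_rpow (s := (k : ℝ)) (p := 1)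
    (by exact_mod_cast neg_one_lt_zero.trans_le (Nat.cast_nonneg k)) one_pos hc
  simpa [Real.rpow_natCast, Real.rpow_one, neg_mul] using h

private lemma intEq (k : ℕ) {c : ℝ} (hc : 0 < c) :
    ∫ t in Set.Ioi (0:ℝ), t ^ k * Real.exp (-(c * t)) = (1/c) ^ (k+1) * (k.factorial : ℝ) := by
  have h := Real.integral_rpow_mul_exp_neg_mul_Ioi (a := (k:ℝ)+1) (by positivity) hc
  simp only [add_sub_cancel_right, Real.rpow_natCast] at h
  rw [show ((1:ℝ)/c) ^ ((k:ℝ)+1) = (1/c)^(k+1) by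
    rw [show ((k:ℝ)+1) = ((k+1:ℕ):ℝ) by push_cast; ring, Real.rpow_natCast],
    Real.Gamma_nat_eq_factorial] at h
  exact h

private lemma intCube (k : ℕ) {c : ℝ} (X : ℝ) (hc : 0 < c) :
    ∫ t in Set.Ioi (0:ℝ), t ^ k * Real.exp (-(c * t)) * (t - X) ^ 3
      = ((k+3).factorial : ℝ) * (1/c)^(k+4) - 3*X*(((k+2).factorial : ℝ) * (1/c)^(k+3))
        + 3*X^2*(((k+1).factorial : ℝ) * (1/c)^(k+2)) - X^3*((k.factorial : ℝ) * (1/c)^(k+1)) := by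
  have i3 : IntegrableOn (fun t : ℝ => 3*X * (t^(k+2) * Real.exp (-(c*t)))) (Set.Ioi 0) :=
    (intOn (k+2) hc).const_mul _
  have i2 : IntegrableOn (fun t : ℝ => 3*X^2 * (t^(k+1) * Real.exp (-(c*t)))) (Set.Ioi 0) :=
    (intOn (k+1) hc).const_mul _
  have i1 : IntegrableOn (fun t : ℝ => X^3 * (t^k * Real.exp (-(c*t)))) (Set.Ioi 0) :=
    (intOn k hc).const_mul _
  have A : IntegrableOn (fun t : ℝ =>
      t^(k+3) * Real.exp (-(c*t)) - 3*X * (t^(k+2) * Real.exp (-(c*t)))) (Set.Ioi 0) :=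
    (intOn (k+3) hc).sub i3
  have B : IntegrableOn (fun t : ℝ =>
      3*X^2 * (t^(k+1) * Real.exp (-(c*t))) - X^3 * (t^k * Real.exp (-(c*t)))) (Set.Ioi 0) :=
    i2.sub i1
  have hrw : (∫ t in Set.Ioi (0:ℝ), t ^ k * Real.exp (-(c * t)) * (t - X) ^ 3)
      = ∫ t in Set.Ioi (0:ℝ), ((t^(k+3) * Real.exp (-(c*t)) - 3*X * (t^(k+2) * Real.exp (-(c*t))))
        + (3*X^2 * (t^(k+1) * Real.exp (-(c*t))) - X^3 * (t^k * Real.exp (-(c*t))))) := by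
    congr 1
    funext t
    ring
  rw [hrw, integral_add A B, integral_sub (intOn (k+3) hc) i3, integral_sub i2 i1,
    integral_const_mul, integral_const_mul, integral_const_mul,
    intEq (k+3) hc, intEq (k+2) hc, intEq (k+1) hc, intEq k hc]
  ring

private lemma fac1 (m : ℕ) : ((m+1).factorial : ℝ) = ((m:ℝ)+1)*(m.factorial:ℝ) := by
  rw [Nat.factorial_succ]; push_cast; ring

private lemma fac2 (m : ℕ) : ((m+2).factorial : ℝ) = ((m:ℝ)+2)*((m:ℝ)+1)*(m.factorial:ℝ) := by
  rw [show (m+2).factorial = (m+2)*(m+1).factorial from rfl]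
  push_cast [fac1]; ring

private lemma fac3 (m : ℕ) :
    ((m+3).factorial : ℝ) = ((m:ℝ)+3)*((m:ℝ)+2)*((m:ℝ)+1)*(m.factorial:ℝ) := by
  rw [show (m+3).factorial = (m+3)*(m+2).factorial from rfl]
  push_cast [fac2]; ring

private lemma bracketEq (k : ℕ) (r F x N : ℝ) (hN : N ≠ 0) (hx : x ≠ 0) :
    (r+3)*(r+2)*(r+1)*F * (x/N)^(k+4) - 3*x*((r+2)*(r+1)*F*(x/N)^(k+3))
      + 3*x^2*((r+1)*F*(x/N)^(k+2)) - x^3*(F*(x/N)^(k+1))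
    = (x/N)^(k+1) * x^3 * F *
        ((r+1)*(r+2)*(r+3)/N^3 - 3*((r+1)*(r+2))/N^2 + 3*(r+1)/N - 1) := by
  rw [show k+4 = (k+1)+3 from rfl, show k+3 = (k+1)+2 from rfl, show k+2 = (k+1)+1 from rfl,
    pow_add, pow_add, pow_add]
  ring

private lemma dlem (p ν : ℕ) :
    ((↑(p+ν):ℝ)+1)*((↑(p+ν):ℝ)+2)*((↑(p+ν):ℝ)+3)/((p:ℝ)+1)^3
      - 3*(((↑(p+ν):ℝ)+1)*((↑(p+ν):ℝ)+2))/((p:ℝ)+1)^2 + 3*((↑(p+ν):ℝ)+1)/((p:ℝ)+1) - 1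
    = 2/((p:ℝ)+1)^2 + (3/((p:ℝ)+1)^2 + 6/((p:ℝ)+1)^3) * (ν.descFactorial 1 : ℝ)
      + 6/((p:ℝ)+1)^3 * (ν.descFactorial 2 : ℝ)
      + 1/((p:ℝ)+1)^3 * (ν.descFactorial 3 : ℝ) := by
  have hN : ((p:ℝ)+1) ≠ 0 := by positivity
  rcases ν with _ | _ | _ | μ
  · norm_num [Nat.descFactorial]
    field_simp
    ring
  · norm_num [Nat.descFactorial]
    push_cast
    field_simp
    ring
  · norm_num [Nat.descFactorial]
    push_cast
    field_simp
    ring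
  · simp only [Nat.descFactorial_succ, Nat.descFactorial_zero, mul_one,
      show ∀ μ:ℕ, μ+3-2 = μ+1 from fun _ => rfl, show ∀ μ:ℕ, μ+3-1 = μ+2 from fun _ => rfl,
      Nat.sub_zero]
    push_cast
    field_simp
    ring

private lemma summand (p ν : ℕ) {β x : ℝ} (hx : 0 < x) :
    (((p+1:ℕ):ℝ) * β) ^ ν / ((ν.factorial : ℝ) * Real.Gamma (((p+1:ℕ):ℝ) + ν)) *
      ∫ t in Set.Ioi (0:ℝ), t ^ ((p+1) + ν - 1) * Real.exp (-(((p+1:ℕ):ℝ) * t) / x) * (t - x) ^ 3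
    = (x/((p:ℝ)+1))^(p+1) * x^3 * ((β*x)^ν / (ν.factorial : ℝ) *
        (2/((p:ℝ)+1)^2 + (3/((p:ℝ)+1)^2 + 6/((p:ℝ)+1)^3) * (ν.descFactorial 1 : ℝ)
          + 6/((p:ℝ)+1)^3 * (ν.descFactorial 2 : ℝ)
          + 1/((p:ℝ)+1)^3 * (ν.descFactorial 3 : ℝ))) := by
  have hN : (0:ℝ) < (p:ℝ)+1 := by positivity
  have hN' : ((p:ℝ)+1) ≠ 0 := ne_of_gt hN
  have hx' : x ≠ 0 := ne_of_gt hx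
  have hc : (0:ℝ) < ((p:ℝ)+1)/x := by positivity
  have hexp : ∀ t:ℝ, -((((p+1:ℕ)):ℝ) * t) / x = -((((p:ℝ)+1)/x) * t) := fun t => by
    push_cast; ring
  simp_rw [hexp]
  rw [show (p+1) + ν - 1 = p + ν from by omega]
  rw [intCube (p+ν) x hc]
  rw [show Real.Gamma (((p+1:ℕ):ℝ) + ν) = ((p+ν).factorial : ℝ) by
    rw [show (((p+1:ℕ):ℝ) + ν) = ((p+ν:ℕ):ℝ) + 1 by push_cast; ring,
      Real.Gamma_nat_eq_factorial]]
  rw [show (1:ℝ)/(((p:ℝ)+1)/x) = x/((p:ℝ)+1) from one_div_div _ _]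
  rw [fac3 (p+ν), fac2 (p+ν), fac1 (p+ν)]
  rw [show ((↑(p+ν):ℝ)+3)*((↑(p+ν):ℝ)+2)*((↑(p+ν):ℝ)+1)*((p+ν).factorial:ℝ)
        * (x/((p:ℝ)+1))^(p+ν+4)
      - 3*x*(((↑(p+ν):ℝ)+2)*((↑(p+ν):ℝ)+1)*((p+ν).factorial:ℝ) * (x/((p:ℝ)+1))^(p+ν+3))
      + 3*x^2*(((↑(p+ν):ℝ)+1)*((p+ν).factorial:ℝ) * (x/((p:ℝ)+1))^(p+ν+2))
      - x^3*(((p+ν).factorial:ℝ) * (x/((p:ℝ)+1))^(p+ν+1))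
      = (x/((p:ℝ)+1))^(p+ν+1) * x^3 * ((p+ν).factorial:ℝ) *
        (((↑(p+ν):ℝ)+1)*((↑(p+ν):ℝ)+2)*((↑(p+ν):ℝ)+3)/((p:ℝ)+1)^3
          - 3*(((↑(p+ν):ℝ)+1)*((↑(p+ν):ℝ)+2))/((p:ℝ)+1)^2
          + 3*((↑(p+ν):ℝ)+1)/((p:ℝ)+1) - 1) from by
    have := bracketEq (p+ν) ((↑(p+ν):ℝ)) ((p+ν).factorial:ℝ) x ((p:ℝ)+1) hN' hx'
    linarith [this]]
  rw [dlem p ν]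
  rw [show p+ν+1 = (p+1)+ν from by omega, pow_add]
  have hF : ((p+ν).factorial : ℝ) ≠ 0 := by positivity
  have hfc : ((ν.factorial : ℕ) : ℝ) ≠ 0 := by positivity
  rw [show (((p+1:ℕ)):ℝ) = (p:ℝ)+1 from by push_cast; ring]
  rw [show ((((p:ℝ)+1)) * β)^ν = (β*x)^ν * (((p:ℝ)+1)/x)^ν from by
    rw [← mul_pow]; congr 1; field_simp]
  field_simp
  rw [mul_assoc, ← mul_pow, show ((p:ℝ)+1)/x * (x/((p:ℝ)+1)) = 1 by field_simp, one_pow, mul_one]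


private lemma hdesc (y : ℝ) (k : ℕ) :
    HasSum (fun ν : ℕ => y^ν / (ν.factorial : ℝ) * (ν.descFactorial k : ℝ))
      (y^k * Real.exp y) := by
  have hexp : HasSum (fun μ : ℕ => y^μ/(μ.factorial:ℝ)) (Real.exp y) := by
    have hs := Real.summable_pow_div_factorial y
    have ht : Real.exp y = ∑' μ:ℕ, y^μ/(μ.factorial:ℝ) := by
      rw [Real.exp_eq_exp_ℝ, NormedSpace.exp_eq_tsum_div]
    exact ht ▸ hs.hasSum
  have hinj : Function.Injective (fun μ : ℕ => μ + k) := add_left_injective k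
  have hzero : ∀ ν : ℕ, ν ∉ Set.range (fun μ : ℕ => μ + k) →
      y^ν / (ν.factorial:ℝ) * (ν.descFactorial k:ℝ) = 0 := by
    intro ν hν
    have hlt : ν < k := by
      by_contra h
      exact hν ⟨ν - k, show ν - k + k = ν by omega⟩
    rw [Nat.descFactorial_eq_zero_iff_lt.2 hlt]
    simp
  refine (hinj.hasSum_iff hzero).1 ?_
  have hcomp : ((fun ν : ℕ => y^ν / (ν.factorial:ℝ) * (ν.descFactorial k:ℝ))
        ∘ (fun μ : ℕ => μ + k))
      = fun μ : ℕ => y^k * (y^μ/(μ.factorial:ℝ)) := by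
    funext μ
    have hfd : (μ.factorial : ℝ) * ((μ+k).descFactorial k : ℝ) = ((μ+k).factorial : ℝ) := by
      have h := Nat.factorial_mul_descFactorial (Nat.le_add_left k μ)
      rw [Nat.add_sub_cancel] at h
      exact_mod_cast h
    have h1 : ((μ+k).factorial : ℝ) ≠ 0 := by positivity
    have h2 : (μ.factorial : ℝ) ≠ 0 := by positivity
    simp only [Function.comp_apply]
    rw [pow_add]
    field_simp
    linear_combination (y^μ * y^k) * hfd
  rw [hcomp]
  exact hexp.mul_left _

theorem stmt14 (n : ℕ) (hn : 1 ≤ n) (β x : ℝ) (hβ : 0 ≤ β) (hx : 0 < x) :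
    PW n β x (fun t => (t - x) ^ 3) = x ^ 3 * (2 + 3 * β * x) / (n : ℝ) ^ 2 + β * x ^ 4 * (6 + 6 * β * x + β ^ 2 * x ^ 2) / (n : ℝ) ^ 3 := by
  obtain ⟨p, rfl⟩ : ∃ p, n = p + 1 := ⟨n - 1, by omega⟩
  have hN : (0:ℝ) < (p:ℝ)+1 := by positivity
  have hN' : ((p:ℝ)+1) ≠ 0 := ne_of_gt hN
  have hx' : x ≠ 0 := ne_of_gt hx
  simp only [PW]
  rw [tsum_congr (fun ν : ℕ => summand p ν hx)]
  set y := β * x with hy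
  set e := Real.exp y with he
  set N := (p:ℝ)+1 with hNd
  -- inner HasSum
  have H := (((hdesc y 0).mul_left (2/N^2)).add ((hdesc y 1).mul_left (3/N^2 + 6/N^3))).add
    (((hdesc y 2).mul_left (6/N^3)).add ((hdesc y 3).mul_left (1/N^3)))
  have hfeq : (fun ν : ℕ => (2/N^2) * (y^ν / (ν.factorial : ℝ) * (ν.descFactorial 0 : ℝ))
        + (3/N^2 + 6/N^3) * (y^ν / (ν.factorial : ℝ) * (ν.descFactorial 1 : ℝ))
        + ((6/N^3) * (y^ν / (ν.factorial : ℝ) * (ν.descFactorial 2 : ℝ))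
          + (1/N^3) * (y^ν / (ν.factorial : ℝ) * (ν.descFactorial 3 : ℝ))))
      = fun ν : ℕ => y^ν / (ν.factorial : ℝ) *
        (2/N^2 + (3/N^2 + 6/N^3) * (ν.descFactorial 1 : ℝ)
          + 6/N^3 * (ν.descFactorial 2 : ℝ) + 1/N^3 * (ν.descFactorial 3 : ℝ)) := by
    funext ν
    simp [Nat.descFactorial_zero]
    ring
  rw [hfeq] at H
  have H2 := H.mul_left ((x/N)^(p+1) * x^3)
  rw [H2.tsum_eq]
  -- final algebra
  have hee : Real.exp (-y) * e = 1 := by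
    rw [he, ← Real.exp_add]; simp
  have hpow1 : ((((p+1:ℕ)):ℝ)/x)^(p+1) * (x/N)^(p+1) = 1 := by
    rw [← mul_pow, show ((((p+1:ℕ)):ℝ)/x) * (x/N) = 1 by
      rw [hNd]; push_cast; field_simp]
    exact one_pow _
  rw [show Real.exp (-y) * (((((p+1:ℕ)):ℝ))/x)^(p+1) *
      ((x/N)^(p+1) * x^3 *
        ((2/N^2) * (y^0 * e) + (3/N^2 + 6/N^3) * (y^1 * e)
          + ((6/N^3) * (y^2 * e) + (1/N^3) * (y^3 * e))))
      = (Real.exp (-y) * e) * (((((p+1:ℕ)):ℝ)/x)^(p+1) * (x/N)^(p+1)) *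
        (x^3 * (2/N^2 + (3/N^2 + 6/N^3) * y + 6/N^3 * y^2 + 1/N^3 * y^3)) from by ring]
  rw [hee, hpow1]
  rw [hy, hNd]
  push_cast
  field_simp
  ring
end

section
/- Define a(k,s,j) = Σ_{i=j}^{min(k, 2k-s)} C(i-1, i-j) · s!/(s-i)! · s₂(s-i, s-k) for nonnegative integers k, s, j (empty sum if lower index exceeds upper). Then a(k, s, 0) = s₂(s, s-k) for all 0 ≤ k ≤ s with s ≤ 2k. -/
/-- Unsigned Stirling numbers of the first kind. -/
noncomputable def stirling1 (r ℓ : ℕ) : ℕ := (ascPochhammer ℕ r).coeff ℓ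

/-- The formal power series `log(1+t) - t` over `ℚ`. -/
noncomputable def phiPS : PowerSeries ℚ :=
  PowerSeries.mk fun n => if n ≤ 1 then 0 else (-1 : ℚ) ^ (n + 1) / n

/-- Associated Stirling numbers of the first kind `s₂(i,j)`, defined by the double generating
function `Σ_{i,j} s₂(i,j) (t^i/i!) u^j = e^{-tu}(1+t)^u = exp(u (log(1+t) - t))`, i.e.
`s₂(i,j) = (i!/j!) · [t^i] (log(1+t) - t)^j`. -/
noncomputable def assocStirling1 (i j : ℕ) : ℚ :=
  (i.factorial : ℚ) / (j.factorial : ℚ) * PowerSeries.coeff i (phiPS ^ j)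

/-- The coefficient `a(k,s,j) = Σ_{i=j}^{min(k, 2k-s)} C(i-1, i-j) · s!/(s-i)! · s₂(s-i, s-k)`
(an empty sum if the lower index exceeds the upper index). -/
noncomputable def acoef (k s j : ℕ) : ℚ :=
  ∑ i ∈ Finset.Icc j k, if (i : ℤ) ≤ 2 * (k : ℤ) - (s : ℤ) then
    ((i - 1).choose (i - j) : ℚ) * ((s.factorial : ℚ) / ((s - i).factorial : ℚ)) *
      assocStirling1 (s - i) (s - k)
  else 0

theorem stmt16 (k s : ℕ) (h1 : k ≤ s) (h2 : s ≤ 2 * k) :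
    acoef k s 0 = assocStirling1 s (s - k) := by
  unfold acoef
  rw [Finset.sum_eq_single 0]
  · have h0 : (0 : ℤ) ≤ 2 * (k : ℤ) - (s : ℤ) := by
      have : (s : ℤ) ≤ 2 * k := by exact_mod_cast h2
      omega
    simp [h0, Nat.factorial_ne_zero, div_self (by positivity : (s.factorial:ℚ) ≠ 0)]
    intro h
    exact absurd h (by omega)
  · intro i hi hne
    have h1' : (i - 1).choose (i - 0) = 0 := by
      apply Nat.choose_eq_zero_of_lt
      omega
    rw [Nat.sub_zero] at h1'
    simp [h1']
  · intro h
    simp [Finset.mem_Icc] at h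
end
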